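/- Let λ < 0, σ₀ ∈ ℝ, x₀ > 0, and let V : [0,∞) → ℝ be continuous with V(x) = 0 for all x ≥ x₀. Let φ : [0,∞) → ℝ be twice continuously differentiable, positive, in L²(0,∞), satisfying −φ'' + Vφ = λφ on [0,∞), φ'(0) = σ₀φ(0), and φ(x) = C e^{−√|λ| x} for all x ≥ x₀ for some constant C > 0. Set γ = −1/‖φ‖², Φ(x) = 1 + γ∫₀ˣ φ(t)² dt, G(x) = γφ(x)²/Φ(x), and σ₁ = σ₀ + φ(0)²/‖φ‖². Then ∫₀^∞ G'(x)(G'(x) − V(x)) dx = −(4/3)|λ|^{3/2} + |λ|(σ₁ − σ₀) − (1/3)(σ₁³ − σ₀³). -/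

import Mathlib

/-!
With `u = φ'/φ` and `w = u - G` (the logarithmic derivative of the commuted solution `φ/Φ`),
`u` solves the Riccati equation `u' = V - λ - u²`, `G' = 2uG - G² = u² - w²`, and so
`G'(G' - V)` is the derivative of `P(u) - P(w)` with `P(s) = |λ| s - s³/3`.
Since `Φ(x) = ∫ₓ^∞ φ² / ‖φ‖²`, the exponential tail of `φ` makes `u ≡ -√|λ|` and `G ≡ -2√|λ|`
on `[x₀, ∞)`, where the integrand therefore vanishes. The integral is the boundary term
`P(u) - P(w)` between `0`, where `u = σ₀` and `w = σ₁`, and `x₀`, where `u = -√|λ|`, `w = √|λ|`.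
-/

open MeasureTheory Set

/-- One-sided derivative on `[0, ∞)`. -/
noncomputable def D (f : ℝ → ℝ) : ℝ → ℝ := derivWithin f (Set.Ici 0)

theorem setIntegral_Ioi_eq_intervalIntegral_of_eq_zero {E : Type*} [NormedAddCommGroup E]
    [NormedSpace ℝ E] {f : ℝ → E} {a b : ℝ} (hab : a ≤ b) (hf : ∀ x, b < x → f x = 0) :
    ∫ x in Ioi a, f x = ∫ x in a..b, f x := by
  have hind : EqOn f ((Ioc a b).indicator f) (Ioi a) := by
    intro x hx
    by_cases hxb : x ≤ b
    · rw [indicator_of_mem (show x ∈ Ioc a b from ⟨hx, hxb⟩)]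
    · rw [indicator_of_notMem (fun h => hxb h.2), hf x (not_le.mp hxb)]
  rw [setIntegral_congr_fun measurableSet_Ioi hind, setIntegral_indicator measurableSet_Ioc,
    inter_eq_right.mpr Ioc_subset_Ioi_self, intervalIntegral.integral_of_le hab]

theorem integral_Ioi_eq_sub_of_hasDerivWithinAt_Ici {F f : ℝ → ℝ} {a b : ℝ} (hab : a ≤ b)
    (hF : ∀ x ∈ Ici a, HasDerivWithinAt F (f x) (Ici a) x) (hf : ContinuousOn f (Icc a b))
    (hzero : ∀ x, b < x → f x = 0) : ∫ x in Ioi a, f x = F b - F a := by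
  rw [setIntegral_Ioi_eq_intervalIntegral_of_eq_zero hab hzero]
  exact intervalIntegral.integral_eq_sub_of_hasDeriv_right_of_le hab
    (fun x hx => (hF x hx.1).continuousWithinAt.mono Icc_subset_Ici_self)
    (fun x hx => ((hF x hx.1.le).hasDerivAt (Ici_mem_nhds hx.1)).hasDerivWithinAt)
    (hf.intervalIntegrable_of_Icc hab)

theorem setIntegral_Ioi_pos {f : ℝ → ℝ} {a : ℝ} (hf : IntegrableOn f (Ioi a))
    (hpos : ∀ x ∈ Ioi a, 0 < f x) : 0 < ∫ x in Ioi a, f x := by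
  have hsupp : Function.support f ∩ Ioi a = Ioi a := inter_eq_right.mpr fun x hx => (hpos x hx).ne'
  rw [setIntegral_pos_iff_support_of_nonneg_ae
    ((ae_restrict_iff' measurableSet_Ioi).mpr (.of_forall fun x hx => (hpos x hx).le)) hf,
    hsupp, Real.volume_Ioi]
  exact ENNReal.zero_lt_top

theorem one_add_neg_inv_mul_intervalIntegral {f : ℝ → ℝ} {a x : ℝ} (hf : IntegrableOn f (Ioi a))
    (hx : a ≤ x) (hQ : ∫ t in Ioi a, f t ≠ 0) :
    1 + -1 / (∫ t in Ioi a, f t) * ∫ t in a..x, f t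
      = (∫ t in Ioi x, f t) / ∫ t in Ioi a, f t := by
  rw [← intervalIntegral.integral_Ioi_sub_Ioi hf hx]
  field_simp
  ring

theorem integral_Ioi_sq_mul_exp {k : ℝ} (hk : 0 < k) (C x : ℝ) :
    ∫ t in Ioi x, (C * Real.exp (-k * t)) ^ 2 = C ^ 2 * Real.exp (-2 * k * x) / (2 * k) := by
  have hsq : ∀ t, (C * Real.exp (-k * t)) ^ 2 = C ^ 2 * Real.exp (-2 * k * t) := fun t => by
    rw [mul_pow, ← Real.exp_nat_mul]; ring_nf
  simp_rw [hsq]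
  rw [integral_const_mul, integral_exp_mul_Ioi (by linarith)]
  field_simp

theorem sq_div_integral_Ioi_sq_of_eq_exp {φ : ℝ → ℝ} {C k x₀ x : ℝ} (hk : 0 < k) (hC : C ≠ 0)
    (hdecay : ∀ y, x₀ ≤ y → φ y = C * Real.exp (-k * y)) (hx : x₀ ≤ x) :
    φ x ^ 2 / ∫ t in Ioi x, φ t ^ 2 = 2 * k := by
  rw [setIntegral_congr_fun measurableSet_Ioi fun t ht => by rw [hdecay t (hx.trans (le_of_lt ht))],
    integral_Ioi_sq_mul_exp hk, hdecay x hx, mul_pow, ← Real.exp_nat_mul]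
  field_simp
  ring_nf

theorem hasDerivWithinAt_intervalIntegral_Ici {f : ℝ → ℝ} {a x : ℝ} (hf : ContinuousOn f (Ici a))
    (hx : x ∈ Ici a) : HasDerivWithinAt (fun y => ∫ t in a..y, f t) (f x) (Ici a) x := by
  have : Fact (x ∈ Icc a (x + 1)) := ⟨⟨hx, by linarith⟩⟩
  have hIcc : ContinuousOn f (Icc a (x + 1)) := hf.mono Icc_subset_Ici_self
  rw [← hasDerivWithinAt_inter (Iic_mem_nhds (lt_add_one x)), Ici_inter_Iic]
  exact intervalIntegral.integral_hasDerivWithinAt_right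
    ((hIcc.mono (Icc_subset_Icc le_rfl (by linarith))).intervalIntegrable_of_Icc hx)
    (hIcc.stronglyMeasurableAtFilter_nhdsWithin measurableSet_Icc x) (hIcc x this.out)

theorem eq_neg_mul_of_hasDerivWithinAt_of_eq_exp {f : ℝ → ℝ} {d C k x : ℝ}
    (hf : HasDerivWithinAt f d (Ici x) x) (hexp : ∀ y, x ≤ y → f y = C * Real.exp (-k * y)) :
    d = -k * f x := by
  have hmodel : HasDerivWithinAt f (C * (Real.exp (-k * x) * -k)) (Ici x) x := by
    refine (((Real.hasDerivAt_exp _).comp x ((hasDerivAt_id x).const_mul (-k))).const_mul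
      C).hasDerivWithinAt.congr (fun y hy => hexp y hy) (hexp x le_rfl) |>.congr_deriv ?_
    simp
  rw [(uniqueDiffWithinAt_Ici x).eq_deriv _ hf hmodel, hexp x le_rfl]
  ring

theorem hasDerivWithinAt_div_of_second_order {f f' : ℝ → ℝ} {s : Set ℝ} {x q : ℝ}
    (hf : HasDerivWithinAt f (f' x) s x) (hf' : HasDerivWithinAt f' (q * f x) s x)
    (hx : f x ≠ 0) : HasDerivWithinAt (fun y => f' y / f y) (q - (f' x / f x) ^ 2) s x :=
  (hf'.div hf hx).congr_deriv (by field_simp)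

theorem hasDerivWithinAt_mul_sq_div {f f' Φ : ℝ → ℝ} {s : Set ℝ} {x γ : ℝ}
    (hf : HasDerivWithinAt f (f' x) s x) (hΦ : HasDerivWithinAt Φ (γ * f x ^ 2) s x)
    (hΦx : Φ x ≠ 0) :
    HasDerivWithinAt (fun y => γ * f y ^ 2 / Φ y)
      (2 * (f' x / f x) * (γ * f x ^ 2 / Φ x) - (γ * f x ^ 2 / Φ x) ^ 2) s x :=
  (((hf.pow 2).const_mul γ).div hΦ hΦx).congr_deriv (by simp only [Pi.pow_apply]; field_simp; ring)

noncomputable def cubicPrimitive (c s : ℝ) : ℝ := c * s - s ^ 3 / 3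

theorem hasDerivWithinAt_cubicPrimitive_sub {u G : ℝ → ℝ} {s : Set ℝ} {x q lam : ℝ}
    (hu : HasDerivWithinAt u (q - lam - u x ^ 2) s x)
    (hG : HasDerivWithinAt G (2 * u x * G x - G x ^ 2) s x) :
    HasDerivWithinAt (fun y => cubicPrimitive (-lam) (u y) - cubicPrimitive (-lam) (u y - G y))
      ((2 * u x * G x - G x ^ 2) * (2 * u x * G x - G x ^ 2 - q)) s x := by
  have hP : ∀ {v : ℝ → ℝ} {v' : ℝ}, HasDerivWithinAt v v' s x →
      HasDerivWithinAt (fun y => cubicPrimitive (-lam) (v y)) ((-lam - v x ^ 2) * v') s x :=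
    fun hv => ((hv.const_mul (-lam)).sub ((hv.pow 3).div_const 3)).congr_deriv (by ring)
  exact ((hP hu).sub (hP (hu.sub hG))).congr_deriv (by simp only [Pi.sub_apply]; ring)

theorem hasDerivWithinAt_D {f : ℝ → ℝ} {n : WithTop ℕ∞} (hf : ContDiffOn ℝ n f (Ici 0))
    (hn : n ≠ 0) {x : ℝ} (hx : x ∈ Ici 0) : HasDerivWithinAt f (D f x) (Ici 0) x :=
  ((hf.differentiableOn hn) x hx).hasDerivWithinAt

section DoubleCommutation

variable {V φ Φ G : ℝ → ℝ} {lam γ : ℝ}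

theorem hasDerivWithinAt_logDeriv (hφ : ContDiffOn ℝ 2 φ (Ici 0))
    (hφpos : ∀ x ∈ Ici (0:ℝ), 0 < φ x)
    (hφode : ∀ x ∈ Ici (0:ℝ), -(D (D φ) x) + V x * φ x = lam * φ x) {x : ℝ} (hx : x ∈ Ici 0) :
    HasDerivWithinAt (fun y => D φ y / φ y) (V x - lam - (D φ x / φ x) ^ 2) (Ici 0) x := by
  have hφ'' : HasDerivWithinAt (D φ) ((V x - lam) * φ x) (Ici 0) x := by
    have h := hasDerivWithinAt_D (f := D φ) (hφ.derivWithin (uniqueDiffOn_Ici 0) le_rfl)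
      one_ne_zero hx
    rwa [show D (D φ) x = (V x - lam) * φ x by linarith [hφode x hx]] at h
  exact hasDerivWithinAt_div_of_second_order (hasDerivWithinAt_D hφ two_ne_zero hx) hφ''
    (hφpos x hx).ne'

theorem hasDerivWithinAt_commuted {x : ℝ} (hφ : ContDiffOn ℝ 2 φ (Ici 0))
    (hΦ : ∀ x, Φ x = 1 + γ * ∫ t in (0:ℝ)..x, φ t ^ 2) (hG : ∀ x, G x = γ * φ x ^ 2 / Φ x)
    (hx : x ∈ Ici 0) (hΦx : Φ x ≠ 0) :
    HasDerivWithinAt G (2 * (D φ x / φ x) * G x - G x ^ 2) (Ici 0) x := by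
  have hΦ' : HasDerivWithinAt Φ (γ * φ x ^ 2) (Ici 0) x := by
    rw [funext hΦ]
    exact ((hasDerivWithinAt_intervalIntegral_Ici (hφ.continuousOn.pow 2) hx).const_mul
      γ).const_add 1
  have h := hasDerivWithinAt_mul_sq_div (hasDerivWithinAt_D hφ two_ne_zero hx) hΦ' hΦx
  rwa [← funext hG, ← hG x] at h

theorem eq_tail_div_of_eq_one_add {x : ℝ} (hint : IntegrableOn (fun x => φ x ^ 2) (Ioi 0))
    (hQ : ∫ t in Ioi 0, φ t ^ 2 ≠ 0) (hγ : γ = -1 / (∫ x in Ioi (0:ℝ), φ x ^ 2))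
    (hΦ : ∀ x, Φ x = 1 + γ * ∫ t in (0:ℝ)..x, φ t ^ 2) (hx : x ∈ Ici 0) :
    Φ x = (∫ t in Ioi x, φ t ^ 2) / ∫ t in Ioi 0, φ t ^ 2 := by
  rw [hΦ, hγ, one_add_neg_inv_mul_intervalIntegral hint hx hQ]

theorem integral_Ioi_sq_pos {x : ℝ} (hφpos : ∀ x ∈ Ici (0:ℝ), 0 < φ x)
    (hint : IntegrableOn (fun x => φ x ^ 2) (Ioi 0)) (hx : x ∈ Ici 0) :
    0 < ∫ t in Ioi x, φ t ^ 2 :=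
  setIntegral_Ioi_pos (hint.mono_set (Ioi_subset_Ioi hx)) fun t ht =>
    pow_pos (hφpos t (mem_Ici.mpr (le_trans hx ht.le))) 2

theorem pos_of_eq_one_add {x : ℝ} (hφpos : ∀ x ∈ Ici (0:ℝ), 0 < φ x)
    (hint : IntegrableOn (fun x => φ x ^ 2) (Ioi 0)) (hγ : γ = -1 / (∫ x in Ioi (0:ℝ), φ x ^ 2))
    (hΦ : ∀ x, Φ x = 1 + γ * ∫ t in (0:ℝ)..x, φ t ^ 2) (hx : x ∈ Ici 0) : 0 < Φ x := by
  have hQ := integral_Ioi_sq_pos hφpos hint self_mem_Ici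
  rw [eq_tail_div_of_eq_one_add hint hQ.ne' hγ hΦ hx]
  exact div_pos (integral_Ioi_sq_pos hφpos hint hx) hQ

theorem eq_neg_two_mul_of_eq_exp {C k x₀ x : ℝ} (hk : 0 < k) (hC : C ≠ 0)
    (hdecay : ∀ y, x₀ ≤ y → φ y = C * Real.exp (-k * y)) (hφpos : ∀ x ∈ Ici (0:ℝ), 0 < φ x)
    (hint : IntegrableOn (fun x => φ x ^ 2) (Ioi 0)) (hγ : γ = -1 / (∫ x in Ioi (0:ℝ), φ x ^ 2))
    (hΦ : ∀ x, Φ x = 1 + γ * ∫ t in (0:ℝ)..x, φ t ^ 2) (hG : ∀ x, G x = γ * φ x ^ 2 / Φ x)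
    (hx₀ : 0 ≤ x₀) (hx : x₀ ≤ x) : G x = -(2 * k) := by
  have hQ := integral_Ioi_sq_pos hφpos hint self_mem_Ici
  rw [hG, eq_tail_div_of_eq_one_add hint hQ.ne' hγ hΦ (hx₀.trans hx), hγ,
    ← sq_div_integral_Ioi_sq_of_eq_exp hk hC hdecay hx]
  field_simp

theorem logDeriv_eq_neg_of_eq_exp {C k x₀ x : ℝ} (hφ : ContDiffOn ℝ 2 φ (Ici 0)) (hC : C ≠ 0)
    (hdecay : ∀ y, x₀ ≤ y → φ y = C * Real.exp (-k * y)) (hx₀ : 0 ≤ x₀) (hx : x₀ ≤ x) :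
    D φ x / φ x = -k := by
  have hφ' := (hasDerivWithinAt_D hφ two_ne_zero (hx₀.trans hx)).mono
    (Ici_subset_Ici.mpr (hx₀.trans hx))
  rw [eq_neg_mul_of_hasDerivWithinAt_of_eq_exp hφ' fun y hy => hdecay y (hx.trans hy),
    hdecay x hx]
  field_simp [Real.exp_ne_zero]

theorem continuousOn_D_of_hasDerivWithinAt (hφ : ContDiffOn ℝ 2 φ (Ici 0))
    (hφpos : ∀ x ∈ Ici (0:ℝ), 0 < φ x)
    (hG : ∀ x ∈ Ici (0:ℝ), HasDerivWithinAt G (2 * (D φ x / φ x) * G x - G x ^ 2) (Ici 0) x) :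
    ContinuousOn (D G) (Ici 0) := by
  have hu : ContinuousOn (fun x => D φ x / φ x) (Ici 0) :=
    (hφ.continuousOn_derivWithin (uniqueDiffOn_Ici 0) one_le_two).div hφ.continuousOn
      fun x hx => (hφpos x hx).ne'
  have hGc : ContinuousOn G (Ici 0) := fun x hx => (hG x hx).continuousWithinAt
  exact (((continuousOn_const.mul hu).mul hGc).sub (hGc.pow 2)).congr fun x hx =>
    (hG x hx).derivWithin (uniqueDiffOn_Ici 0 x hx)

end DoubleCommutation

theorem integral_G_deriv_general
    (V φ : ℝ → ℝ) (lam σ₀ x₀ C : ℝ) (hlam : lam < 0) (hx₀ : 0 < x₀) (hC : 0 < C)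
    (hV : ContinuousOn V (Set.Ici 0))
    (hφ : ContDiffOn ℝ 2 φ (Set.Ici 0))
    (hφpos : ∀ x ∈ Set.Ici (0:ℝ), 0 < φ x)
    (hφL2 : MemLp φ 2 (volume.restrict (Set.Ioi (0:ℝ))))
    (hφode : ∀ x ∈ Set.Ici (0:ℝ), -(D (D φ) x) + V x * φ x = lam * φ x)
    (hφbc : D φ 0 = σ₀ * φ 0)
    (hφdecay : ∀ x, x₀ ≤ x → φ x = C * Real.exp (-Real.sqrt |lam| * x))
    (γ : ℝ) (hγ : γ = -1 / (∫ x in Set.Ioi (0:ℝ), (φ x) ^ 2))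
    (Φ : ℝ → ℝ) (hΦ : ∀ x, Φ x = 1 + γ * ∫ t in (0:ℝ)..x, (φ t) ^ 2)
    (G : ℝ → ℝ) (hG : ∀ x, G x = γ * (φ x) ^ 2 / Φ x)
    (σ₁ : ℝ) (hσ₁ : σ₁ = σ₀ + (φ 0) ^ 2 / (∫ x in Set.Ioi (0:ℝ), (φ x) ^ 2)) :
    ∫ x in Set.Ioi (0:ℝ), D G x * (D G x - V x)
      = -(4/3) * |lam| ^ ((3:ℝ)/2) + |lam| * (σ₁ - σ₀) - 1/3 * (σ₁ ^ 3 - σ₀ ^ 3) := by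
  set k := √|lam| with hk_def
  have hk : 0 < k := Real.sqrt_pos.mpr (abs_pos.mpr hlam.ne)
  have hint : IntegrableOn (fun x => φ x ^ 2) (Ioi 0) := hφL2.integrable_sq
  have hGconst : ∀ x, x₀ ≤ x → G x = -(2 * k) := fun x hx =>
    eq_neg_two_mul_of_eq_exp hk hC.ne' hφdecay hφpos hint hγ hΦ hG hx₀.le hx
  set u : ℝ → ℝ := fun x => D φ x / φ x
  have huconst : ∀ x, x₀ ≤ x → u x = -k := fun x hx =>
    logDeriv_eq_neg_of_eq_exp hφ hC.ne' hφdecay hx₀.le hx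
  have hGd : ∀ x ∈ Ici (0:ℝ), HasDerivWithinAt G (2 * u x * G x - G x ^ 2) (Ici 0) x :=
    fun x hx => hasDerivWithinAt_commuted hφ hΦ hG hx (pos_of_eq_one_add hφpos hint hγ hΦ hx).ne'
  have hDG : ∀ x ∈ Ici (0:ℝ), D G x = 2 * u x * G x - G x ^ 2 :=
    fun x hx => (hGd x hx).derivWithin (uniqueDiffOn_Ici 0 x hx)
  have hF : ∀ x ∈ Ici (0:ℝ), HasDerivWithinAt
      (fun y => cubicPrimitive (-lam) (u y) - cubicPrimitive (-lam) (u y - G y))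
      (D G x * (D G x - V x)) (Ici 0) x := fun x hx => by
    rw [hDG x hx]
    exact hasDerivWithinAt_cubicPrimitive_sub (hasDerivWithinAt_logDeriv hφ hφpos hφode hx)
      (hGd x hx)
  have hzero : ∀ x, x₀ < x → D G x * (D G x - V x) = 0 := fun x hx => by
    rw [hDG x (hx₀.le.trans hx.le), huconst x hx.le, hGconst x hx.le]; ring
  have hDGcont := continuousOn_D_of_hasDerivWithinAt hφ hφpos hGd
  rw [integral_Ioi_eq_sub_of_hasDerivWithinAt_Ici hx₀.le hF
    ((hDGcont.mul (hDGcont.sub hV)).mono Icc_subset_Ici_self) hzero]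
  have hu0 : u 0 = σ₀ := by simp [u, hφbc, (hφpos 0 self_mem_Ici).ne']
  have hw0 : u 0 - G 0 = σ₁ := by
    rw [hu0, hG, hΦ, intervalIntegral.integral_same, mul_zero, add_zero, div_one, hσ₁, hγ]; ring
  have hk2 : -lam = k ^ 2 := by rw [hk_def, Real.sq_sqrt (abs_nonneg lam), abs_of_neg hlam]
  have hk3 : |lam| ^ ((3:ℝ) / 2) = k ^ 3 := by
    rw [Real.rpow_div_two_eq_sqrt _ (abs_nonneg lam)]; norm_cast
  rw [hw0, hu0, huconst x₀ le_rfl, hGconst x₀ le_rfl, hk3, abs_of_neg hlam, hk2]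
  simp only [cubicPrimitive]
  ring

/-- The value of the integral `∫₀^∞ G'(G' - V) dx` arising in one step of the
double commutation method. -/
theorem integral_G_deriv
    (V φ : ℝ → ℝ) (lam σ₀ x₀ C : ℝ) (hlam : lam < 0) (hx₀ : 0 < x₀) (hC : 0 < C)
    (hV : ContinuousOn V (Set.Ici 0))
    (hVsupp : ∀ x, x₀ ≤ x → V x = 0)
    (hφ : ContDiffOn ℝ 2 φ (Set.Ici 0))
    (hφpos : ∀ x ∈ Set.Ici (0:ℝ), 0 < φ x)
    (hφL2 : MemLp φ 2 (volume.restrict (Set.Ioi (0:ℝ))))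
    (hφode : ∀ x ∈ Set.Ici (0:ℝ), -(D (D φ) x) + V x * φ x = lam * φ x)
    (hφbc : D φ 0 = σ₀ * φ 0)
    (hφdecay : ∀ x, x₀ ≤ x → φ x = C * Real.exp (-Real.sqrt |lam| * x))
    (γ : ℝ) (hγ : γ = -1 / (∫ x in Set.Ioi (0:ℝ), (φ x) ^ 2))
    (Φ : ℝ → ℝ) (hΦ : ∀ x, Φ x = 1 + γ * ∫ t in (0:ℝ)..x, (φ t) ^ 2)
    (G : ℝ → ℝ) (hG : ∀ x, G x = γ * (φ x) ^ 2 / Φ x)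
    (σ₁ : ℝ) (hσ₁ : σ₁ = σ₀ + (φ 0) ^ 2 / (∫ x in Set.Ioi (0:ℝ), (φ x) ^ 2)) :
    ∫ x in Set.Ioi (0:ℝ), D G x * (D G x - V x)
      = -(4/3) * |lam| ^ ((3:ℝ)/2) + |lam| * (σ₁ - σ₀) - 1/3 * (σ₁ ^ 3 - σ₀ ^ 3) :=
  integral_G_deriv_general V φ lam σ₀ x₀ C hlam hx₀ hC hV hφ hφpos hφL2 hφode hφbc hφdecay γ hγ Φ hΦ
    G hG σ₁ hσ₁
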